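/- Let E, F ⊆ R^n be measurable sets and let I(A,B) := ∫_A ∫_B |x−y|^{−(n+2s)} dy dx for disjoint measurable A, B. Set E_t := F (an arbitrary second set), E^∪ := E ∪ F, E^∩ := E ∩ F. Then I(E, E^c) + I(F, F^c) − I(E^∪, (E^∪)^c) − I(E^∩, (E^∩)^c) = 2 I(F\E, E\F), whenever all these quantities are finite. -/
import Mathlib

open MeasureTheory Metric Set
open scoped ENNReal

/-- Nonlocal interaction with kernel `|x-y|^{-(n+2s)}`. -/
noncomputable def interaction (n : ℕ) (s : ℝ)
    (A B : Set (EuclideanSpace ℝ (Fin n))) : ℝ≥0∞ :=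
  ∫⁻ x in A, ∫⁻ y in B, ENNReal.ofReal (‖x - y‖ ^ (-((n : ℝ) + 2 * s)))

section aux
variable {n : ℕ} {s : ℝ}

lemma ker_meas (n : ℕ) (s : ℝ) :
    Measurable (fun p : EuclideanSpace ℝ (Fin n) × EuclideanSpace ℝ (Fin n) =>
      ENNReal.ofReal (‖p.1 - p.2‖ ^ (-((n : ℝ) + 2 * s)))) := by
  fun_prop

lemma inner_meas (n : ℕ) (s : ℝ) (B : Set (EuclideanSpace ℝ (Fin n))) :
    Measurable (fun x => ∫⁻ y in B, ENNReal.ofReal (‖x - y‖ ^ (-((n : ℝ) + 2 * s)))) :=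
  (ker_meas n s).lintegral_prod_right'

lemma inter_union_left {A A' B : Set (EuclideanSpace ℝ (Fin n))}
    (hA' : MeasurableSet A') (h : Disjoint A A') :
    interaction n s (A ∪ A') B = interaction n s A B + interaction n s A' B :=
  lintegral_union hA' h

lemma inter_union_right {A B B' : Set (EuclideanSpace ℝ (Fin n))}
    (hB' : MeasurableSet B') (h : Disjoint B B') :
    interaction n s A (B ∪ B') = interaction n s A B + interaction n s A B' := by
  unfold interaction
  rw [← lintegral_add_left (inner_meas n s B)]
  exact lintegral_congr fun x => lintegral_union hB' h

lemma inter_symm (A B : Set (EuclideanSpace ℝ (Fin n))) :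
    interaction n s A B = interaction n s B A := by
  unfold interaction
  rw [lintegral_lintegral_swap (ker_meas n s).aemeasurable]
  simp_rw [norm_sub_rev]

lemma key_abstract {A B C D : Set (EuclideanSpace ℝ (Fin n))}
    (hBm : MeasurableSet B) (hCm : MeasurableSet C) (hDm : MeasurableSet D)
    (dAB : Disjoint A B) (dAC : Disjoint A C) (dBC : Disjoint B C)
    (dBD : Disjoint B D) (dCD : Disjoint C D) :
    interaction n s (A ∪ B) (C ∪ D) + interaction n s (A ∪ C) (B ∪ D)
      = interaction n s ((A ∪ B) ∪ C) D + interaction n s A (B ∪ (C ∪ D))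
        + 2 * interaction n s C B := by
  have dABC : Disjoint (A ∪ B) C := disjoint_union_left.2 ⟨dAC, dBC⟩
  have dBCD : Disjoint B (C ∪ D) := disjoint_union_right.2 ⟨dBC, dBD⟩
  rw [inter_union_left hBm dAB, inter_union_right hDm dCD, inter_union_right hDm dCD,
    inter_union_left hCm dAC, inter_union_right hDm dBD, inter_union_right hDm dBD,
    inter_union_left hCm dABC, inter_union_left hBm dAB,
    inter_union_right (hCm.union hDm) dBCD, inter_union_right hDm dCD,
    inter_symm B C, two_mul]
  ring

end aux

/-- `I(E,Eᶜ) + I(F,Fᶜ) − I(E∪F,(E∪F)ᶜ) − I(E∩F,(E∩F)ᶜ) = 2 I(F\E, E\F)`,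
whenever all interactions are finite. -/
theorem stmt6 (n : ℕ) (hn : 1 ≤ n) (s : ℝ) (hs : 0 < s) (hs' : s < 1/2)
    (E F : Set (EuclideanSpace ℝ (Fin n))) (hE : MeasurableSet E) (hF : MeasurableSet F)
    (h1 : interaction n s E Eᶜ ≠ ⊤) (h2 : interaction n s F Fᶜ ≠ ⊤)
    (h3 : interaction n s (E ∪ F) (E ∪ F)ᶜ ≠ ⊤)
    (h4 : interaction n s (E ∩ F) (E ∩ F)ᶜ ≠ ⊤)
    (h5 : interaction n s (F \ E) (E \ F) ≠ ⊤) :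
    (interaction n s E Eᶜ).toReal + (interaction n s F Fᶜ).toReal
      - (interaction n s (E ∪ F) (E ∪ F)ᶜ).toReal
      - (interaction n s (E ∩ F) (E ∩ F)ᶜ).toReal
      = 2 * (interaction n s (F \ E) (E \ F)).toReal := by
  have hBm : MeasurableSet (E \ F) := hE.diff hF
  have hCm : MeasurableSet (F \ E) := hF.diff hE
  have hDm : MeasurableSet (E ∪ F)ᶜ := (hE.union hF).compl
  have eE : E = (E ∩ F) ∪ (E \ F) := by ext x; by_cases hx : x ∈ F <;> simp [hx]
  have eEc : Eᶜ = (F \ E) ∪ (E ∪ F)ᶜ := by ext x; by_cases hx : x ∈ F <;> simp [hx]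
  have eF : F = (E ∩ F) ∪ (F \ E) := by ext x; by_cases hx : x ∈ E <;> simp [hx]
  have eFc : Fᶜ = (E \ F) ∪ (E ∪ F)ᶜ := by ext x; by_cases hx : x ∈ E <;> simp [hx]
  have eU : E ∪ F = ((E ∩ F) ∪ (E \ F)) ∪ (F \ E) := by
    ext x; by_cases hx : x ∈ E <;> simp [hx]
  have eIc : (E ∩ F)ᶜ = (E \ F) ∪ ((F \ E) ∪ (E ∪ F)ᶜ) := by
    ext x; by_cases hx : x ∈ E <;> by_cases hy : x ∈ F <;> simp [hx, hy]
  have dAB : Disjoint (E ∩ F) (E \ F) :=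
    disjoint_left.2 fun x hx hx' => hx'.2 hx.2
  have dAC : Disjoint (E ∩ F) (F \ E) :=
    disjoint_left.2 fun x hx hx' => hx'.2 hx.1
  have dBC : Disjoint (E \ F) (F \ E) :=
    disjoint_left.2 fun x hx hx' => hx.2 hx'.1
  have dBD : Disjoint (E \ F) (E ∪ F)ᶜ :=
    disjoint_left.2 fun x hx hx' => hx' (Or.inl hx.1)
  have dCD : Disjoint (F \ E) (E ∪ F)ᶜ :=
    disjoint_left.2 fun x hx hx' => hx' (Or.inr hx.1)
  have key : interaction n s E Eᶜ + interaction n s F Fᶜ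
      = interaction n s (E ∪ F) (E ∪ F)ᶜ + interaction n s (E ∩ F) (E ∩ F)ᶜ
        + 2 * interaction n s (F \ E) (E \ F) := by
    have := key_abstract (s := s) hBm hCm hDm dAB dAC dBC dBD dCD
    have e1 : E ∪ F \ E = E ∪ F := union_diff_self
    have e2 : E \ F ∪ Eᶜ = (E ∩ F)ᶜ := by
      ext x; by_cases hx : x ∈ E <;> simp [hx]
    rw [← eE, ← eEc, ← eF, ← eFc, e1, e2] at this
    exact this
  -- finiteness of the pieces appearing on the right
  have split5 : interaction n s (E ∪ F) (E ∪ F)ᶜ + interaction n s (E ∩ F) (E ∩ F)ᶜ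
      + 2 * interaction n s (F \ E) (E \ F) ≠ ⊤ := by
    refine ENNReal.add_ne_top.2 ⟨ENNReal.add_ne_top.2 ⟨h3, h4⟩, ?_⟩
    exact ENNReal.mul_ne_top (by simp) h5
  have key' := congrArg ENNReal.toReal key
  rw [ENNReal.toReal_add h1 h2, ENNReal.toReal_add (ENNReal.add_ne_top.2 ⟨h3, h4⟩)
      (ENNReal.mul_ne_top (by simp) h5),
    ENNReal.toReal_add h3 h4, ENNReal.toReal_mul] at key'
  simp only [ENNReal.toReal_ofNat] at key'
  linarith
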